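/- arXiv:2111.11374 — 10 statements merged into one kernel-verified Lean document; each statement's English description precedes it below -/
import Mathlib

section
/- Let (v^k), (θ^k), (ε^k) and (δ^k) be sequences of nonnegative real numbers such that ∑_{k=0}^∞ ε^k < ∞, ∑_{k=0}^∞ δ^k < ∞, and v^{k+1} ≤ (1+δ^k) v^k − θ^k + ε^k for all k ∈ ℕ. Then ∑_{k=0}^∞ θ^k < ∞, and the sequence (v^k) is bounded and converges to a nonnegative real number. -/
open Filter

/-- Lemma 5.31 of Bauschke–Combettes (2011). -/
theorem stmt_1 (v θ ε δ : ℕ → ℝ)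
    (hv : ∀ k, 0 ≤ v k) (hθ : ∀ k, 0 ≤ θ k) (hε : ∀ k, 0 ≤ ε k) (hδ : ∀ k, 0 ≤ δ k)
    (hεsum : Summable ε) (hδsum : Summable δ)
    (hrec : ∀ k, v (k + 1) ≤ (1 + δ k) * v k - θ k + ε k) :
    Summable θ ∧ (∃ M, ∀ k, v k ≤ M) ∧ (∃ L, 0 ≤ L ∧ Tendsto v atTop (nhds L)) := by
  set P : ℕ → ℝ := fun k => ∏ j ∈ Finset.range k, (1 + δ j) with hPdef
  have hP1 : ∀ k, 1 ≤ P k := by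
    intro k
    simp only [hPdef]
    calc (1:ℝ) = ∏ _j ∈ Finset.range k, (1:ℝ) := by simp
      _ ≤ ∏ j ∈ Finset.range k, (1 + δ j) :=
        Finset.prod_le_prod (by simp) (fun j _ => by linarith [hδ j])
  have hPpos : ∀ k, 0 < P k := fun k => lt_of_lt_of_le one_pos (hP1 k)
  have hPsucc : ∀ k, P (k + 1) = P k * (1 + δ k) := fun k => Finset.prod_range_succ _ k
  have hPmono : Monotone P := monotone_nat_of_le_succ fun k => by
    rw [hPsucc]; nlinarith [hPpos k, hδ k]
  have hPle : ∀ k, P k ≤ Real.exp (∑' j, δ j) := by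
    intro k
    calc P k ≤ ∏ j ∈ Finset.range k, Real.exp (δ j) :=
          Finset.prod_le_prod (fun j _ => by linarith [hδ j])
            (fun j _ => by linarith [Real.add_one_le_exp (δ j)])
      _ = Real.exp (∑ j ∈ Finset.range k, δ j) := (Real.exp_sum _ _).symm
      _ ≤ Real.exp (∑' j, δ j) :=
          Real.exp_le_exp.2 (Summable.sum_le_tsum _ (fun j _ => hδ j) hδsum)
  set w : ℕ → ℝ := fun k => v k / P k with hwdef
  have hwnn : ∀ k, 0 ≤ w k := fun k => div_nonneg (hv k) (hPpos k).le
  have hwstep : ∀ k, w (k + 1) ≤ w k + ε k := by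
    intro k
    have h1 : v (k + 1) ≤ (1 + δ k) * v k + ε k := by linarith [hrec k, hθ k]
    have h2 : w (k + 1) ≤ ((1 + δ k) * v k + ε k) / P (k + 1) := by
      simp only [hwdef]
      gcongr
      exact (hPpos _).le
    have hne : P k ≠ 0 := (hPpos k).ne'
    have hne2 : (1 + δ k) ≠ 0 := by nlinarith [hδ k]
    have h3 : ((1 + δ k) * v k + ε k) / P (k + 1) = v k / P k + ε k / P (k + 1) := by
      rw [hPsucc]
      field_simp
    have h4 : ε k / P (k + 1) ≤ ε k := div_le_self (hε k) (hP1 _)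
    calc w (k + 1) ≤ ((1 + δ k) * v k + ε k) / P (k + 1) := h2
      _ = v k / P k + ε k / P (k + 1) := h3
      _ ≤ w k + ε k := by simp only [hwdef]; linarith
  set E : ℕ → ℝ := fun k => ∑ j ∈ Finset.range k, ε j with hEdef
  have hEle : ∀ k, E k ≤ ∑' j, ε j := fun k =>
    Summable.sum_le_tsum _ (fun j _ => hε j) hεsum
  have hEnn : ∀ k, 0 ≤ E k := fun k => Finset.sum_nonneg fun j _ => hε j
  set A : ℕ → ℝ := fun k => w k - E k with hAdef
  have hAanti : Antitone A := antitone_nat_of_succ_le fun k => by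
    have := hwstep k
    simp only [hAdef, hEdef, Finset.sum_range_succ]
    linarith
  have hAbdd : BddBelow (Set.range A) := by
    refine ⟨-(∑' j, ε j), ?_⟩
    rintro x ⟨k, rfl⟩
    have := hwnn k
    have := hEle k
    simp only [hAdef]
    linarith
  have hAtend : Tendsto A atTop (nhds (⨅ k, A k)) := tendsto_atTop_ciInf hAanti hAbdd
  have hEtend : Tendsto E atTop (nhds (∑' j, ε j)) := hεsum.hasSum.tendsto_sum_nat
  have hwtend : Tendsto w atTop (nhds ((⨅ k, A k) + ∑' j, ε j)) := by
    have := hAtend.add hEtend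
    have hfun : w = fun k => A k + E k := by funext k; simp [hAdef]
    rw [hfun]; exact this
  have hPbdd : BddAbove (Set.range P) := by
    refine ⟨Real.exp (∑' j, δ j), ?_⟩
    rintro x ⟨k, rfl⟩; exact hPle k
  have hPtend : Tendsto P atTop (nhds (⨆ k, P k)) := tendsto_atTop_ciSup hPmono hPbdd
  have hvw : v = fun k => w k * P k := by
    funext k; exact (div_mul_cancel₀ _ (hPpos k).ne').symm
  have hvtend : Tendsto v atTop (nhds (((⨅ k, A k) + ∑' j, ε j) * ⨆ k, P k)) := by
    rw [hvw]; exact hwtend.mul hPtend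
  -- boundedness
  have hP0 : P 0 = 1 := by simp [hPdef]
  have hw0 : w 0 = v 0 := by simp [hwdef, hP0]
  have hwle : ∀ k, w k ≤ v 0 + ∑' j, ε j := by
    intro k
    have hA0 : A k ≤ A 0 := hAanti (Nat.zero_le k)
    have : A 0 = v 0 := by simp [hAdef, hEdef, hw0]
    have := hEle k
    simp only [hAdef] at hA0
    linarith [hEle k, hEnn 0]
  have hM : ∀ k, v k ≤ (v 0 + ∑' j, ε j) * Real.exp (∑' j, δ j) := by
    intro k
    have h1 : v k = w k * P k := by rw [hvw]
    rw [h1]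
    have hexp : (0:ℝ) < Real.exp (∑' j, δ j) := Real.exp_pos _
    exact mul_le_mul (hwle k) (hPle k) (hPpos k).le
      (by have := hwnn 0; linarith [hwle 0])
  set M : ℝ := (v 0 + ∑' j, ε j) * Real.exp (∑' j, δ j) with hMdef
  have hMnn : 0 ≤ M := le_trans (hv 0) (hM 0)
  -- summability of θ
  have hkey : ∀ n, (∑ k ∈ Finset.range n, θ k) + v n ≤
      v 0 + ∑ k ∈ Finset.range n, (δ k * M + ε k) := by
    intro n
    induction n with
    | zero => simp
    | succ n ih =>
      have h1 := hrec n
      have h2 : δ n * v n ≤ δ n * M := mul_le_mul_of_nonneg_left (hM n) (hδ n)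
      simp only [Finset.sum_range_succ]
      nlinarith [hM n]
  have hθsum : Summable θ := by
    apply summable_of_sum_range_le hθ (c := v 0 + (M * ∑' j, δ j + ∑' j, ε j))
    intro n
    have h1 := hkey n
    have h2 : ∑ k ∈ Finset.range n, (δ k * M + ε k) =
        (∑ k ∈ Finset.range n, δ k) * M + ∑ k ∈ Finset.range n, ε k := by
      rw [Finset.sum_add_distrib, Finset.sum_mul]
    have h3 : ∑ k ∈ Finset.range n, δ k ≤ ∑' j, δ j :=
      Summable.sum_le_tsum _ (fun j _ => hδ j) hδsum
    have h4 := hEle n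
    have h5 : (∑ k ∈ Finset.range n, δ k) * M ≤ (∑' j, δ j) * M :=
      mul_le_mul_of_nonneg_right h3 hMnn
    simp only [hEdef] at h4
    nlinarith [hv n]
  refine ⟨hθsum, ⟨M, hM⟩, ⟨_, ?_, hvtend⟩⟩
  exact ge_of_tendsto' hvtend hv
end

section
/- Let (v^k) be a sequence of real numbers and let (ε^k) and (γ_k) be sequences of nonnegative real numbers such that v^{k+1} ≤ γ_k v^k + ε^k for all k ∈ ℕ, where: (1) 0 ≤ γ_k < 1 for all k; (2) ∑_{k=0}^∞ (1 − γ_k) = ∞; and (3) lim_{k→∞} ε^k/(1 − γ_k) = 0. Then limsup_{k→∞} v^k ≤ 0; in particular, if v^k ≥ 0 for all k, then lim_{k→∞} v^k = 0. -/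
open Filter

/-- Lemma 2.2.3 of Polyak (1987). -/
theorem stmt_4 (v ε γ : ℕ → ℝ)
    (hε : ∀ k, 0 ≤ ε k)
    (hγ : ∀ k, 0 ≤ γ k ∧ γ k < 1)
    (hrec : ∀ k, v (k + 1) ≤ γ k * v k + ε k)
    (hdiv : ¬ Summable (fun k => 1 - γ k))
    (hlim : Tendsto (fun k => ε k / (1 - γ k)) atTop (nhds 0)) :
    limsup v atTop ≤ 0 ∧ ((∀ k, 0 ≤ v k) → Tendsto v atTop (nhds 0)) := by
  have hγpos : ∀ k, (0:ℝ) < 1 - γ k := fun k => by linarith [(hγ k).2]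
  -- Key claim: for every δ > 0, eventually v k ≤ 2δ.
  have key : ∀ δ : ℝ, 0 < δ → ∀ᶠ k in atTop, v k ≤ 2 * δ := by
    intro δ hδ
    obtain ⟨N, hN⟩ : ∃ N, ∀ k, N ≤ k → ε k / (1 - γ k) ≤ δ := by
      have h := hlim.eventually (eventually_le_nhds hδ)
      exact eventually_atTop.mp h
    have hεδ : ∀ k, N ≤ k → ε k ≤ δ * (1 - γ k) := by
      intro k hk
      have h := hN k hk
      rw [div_le_iff₀ (hγpos k)] at h
      linarith
    set M := max (v N - δ) 0 with hM
    have hM0 : (0:ℝ) ≤ M := le_max_right _ _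
    have hind : ∀ n, v (N + n) - δ ≤ (∏ j ∈ Finset.Ico N (N + n), γ j) * M := by
      intro n
      induction n with
      | zero => simp [hM, le_max_left]
      | succ n ih =>
        have hP : (0:ℝ) ≤ ∏ j ∈ Finset.Ico N (N + n), γ j :=
          Finset.prod_nonneg fun j _ => (hγ j).1
        have h1 : v (N + n + 1) - δ ≤ γ (N + n) * (v (N + n) - δ) := by
          have h2 := hrec (N + n)
          have h3 := hεδ (N + n) (Nat.le_add_right _ _)
          nlinarith [(hγ (N + n)).1]
        calc v (N + (n + 1)) - δ ≤ γ (N + n) * (v (N + n) - δ) := by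
              exact h1
          _ ≤ γ (N + n) * ((∏ j ∈ Finset.Ico N (N + n), γ j) * M) :=
              mul_le_mul_of_nonneg_left ih (hγ (N + n)).1
          _ = (∏ j ∈ Finset.Ico N (N + (n + 1)), γ j) * M := by
              rw [show N + (n + 1) = (N + n) + 1 from rfl,
                Finset.prod_Ico_succ_top (Nat.le_add_right _ _)]
              ring
    -- the product tends to 0
    have hS : Tendsto (fun k => ∑ j ∈ Finset.range k, (1 - γ j)) atTop atTop :=
      (not_summable_iff_tendsto_nat_atTop_of_nonneg
        (fun j => le_of_lt (hγpos j))).mp hdiv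
    have hE : Tendsto
        (fun k => Real.exp ((∑ j ∈ Finset.range N, (1 - γ j))
          - ∑ j ∈ Finset.range k, (1 - γ j))) atTop (nhds 0) := by
      apply Real.tendsto_exp_atBot.comp
      apply tendsto_atBot_add_const_left
      exact tendsto_neg_atBot_iff.mpr hS
    have hbound : ∀ k, N ≤ k → (∏ j ∈ Finset.Ico N k, γ j)
        ≤ Real.exp ((∑ j ∈ Finset.range N, (1 - γ j))
          - ∑ j ∈ Finset.range k, (1 - γ j)) := by
      intro k hk
      have h1 : (∏ j ∈ Finset.Ico N k, γ j) ≤ ∏ j ∈ Finset.Ico N k, Real.exp (γ j - 1) := by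
        apply Finset.prod_le_prod (fun j _ => (hγ j).1)
        intro j _
        have := Real.add_one_le_exp (γ j - 1)
        linarith
      have h2 : ∏ j ∈ Finset.Ico N k, Real.exp (γ j - 1)
          = Real.exp (∑ j ∈ Finset.Ico N k, (γ j - 1)) := (Real.exp_sum _ _).symm
      have h3 : (∑ j ∈ Finset.Ico N k, (γ j - 1))
          = (∑ j ∈ Finset.range N, (1 - γ j)) - ∑ j ∈ Finset.range k, (1 - γ j) := by
        have h4 : (∑ j ∈ Finset.Ico N k, (1 - γ j))
            = (∑ j ∈ Finset.range k, (1 - γ j)) - ∑ j ∈ Finset.range N, (1 - γ j) :=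
          Finset.sum_Ico_eq_sub _ hk
        have h5 : (∑ j ∈ Finset.Ico N k, (γ j - 1))
            = -∑ j ∈ Finset.Ico N k, (1 - γ j) := by
          rw [← Finset.sum_neg_distrib]
          apply Finset.sum_congr rfl
          intro j _; ring
        rw [h5, h4]; ring
      rw [← h3]; exact h1.trans_eq h2
    have hprod : Tendsto (fun k => (∏ j ∈ Finset.Ico N k, γ j) * M) atTop (nhds 0) := by
      have h0 : Tendsto (fun k => (∏ j ∈ Finset.Ico N k, γ j)) atTop (nhds 0) := by
        apply squeeze_zero' (g := fun k => Real.exp ((∑ j ∈ Finset.range N, (1 - γ j))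
          - ∑ j ∈ Finset.range k, (1 - γ j)))
        · exact Eventually.of_forall fun k => Finset.prod_nonneg fun j _ => (hγ j).1
        · exact eventually_atTop.mpr ⟨N, hbound⟩
        · exact hE
      simpa using h0.mul_const M
    have hsmall : ∀ᶠ k in atTop, (∏ j ∈ Finset.Ico N k, γ j) * M ≤ δ := by
      have := hprod.eventually (eventually_le_nhds hδ)
      exact this
    filter_upwards [hsmall, eventually_ge_atTop N] with k hk1 hk2
    have h6 := hind (k - N)
    rw [Nat.add_sub_cancel' hk2] at h6
    linarith
  constructor
  · -- limsup v atTop ≤ 0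
    rw [Filter.limsup_eq]
    set S := {a : ℝ | ∀ᶠ n in atTop, v n ≤ a} with hSdef
    by_cases hb : BddBelow S
    · by_contra hc
      push_neg at hc
      have hc4 : (0:ℝ) < sInf S / 4 := by linarith
      have hmem : 2 * (sInf S / 4) ∈ S := key _ hc4
      have := csInf_le hb hmem
      linarith
    · rw [Real.sInf_of_not_bddBelow hb]
  · intro hv
    rw [tendsto_order]
    constructor
    · intro a ha
      exact Eventually.of_forall fun k => lt_of_lt_of_le ha (hv k)
    · intro a ha
      filter_upwards [key (a / 4) (by linarith)] with k hk
      linarith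
end

section
/- Let (v^k), (θ^k), (ε^k) and (δ^k) be sequences of nonnegative real numbers such that ∑_{k=0}^∞ ε^k < ∞, ∑_{k=0}^∞ δ^k < ∞, δ^k ∈ [0,1) for all k ∈ ℕ, and v^{k+1} ≤ (1−δ^k) v^k + ε^k − θ^k for all k ∈ ℕ. Then (v^k) is bounded and converges to some nonnegative real number, and ∑_{k=0}^∞ θ^k < ∞. -/
open Filter

/-- Lemma with coefficient (1 - δᵏ). -/
theorem stmt_5 (v θ ε δ : ℕ → ℝ)
    (hv : ∀ k, 0 ≤ v k) (hθ : ∀ k, 0 ≤ θ k) (hε : ∀ k, 0 ≤ ε k)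
    (hεsum : Summable ε) (hδsum : Summable δ)
    (hδ : ∀ k, 0 ≤ δ k ∧ δ k < 1)
    (hrec : ∀ k, v (k + 1) ≤ (1 - δ k) * v k + ε k - θ k) :
    (∃ M, ∀ k, v k ≤ M) ∧ (∃ L, 0 ≤ L ∧ Tendsto v atTop (nhds L)) ∧ Summable θ := by
  have h1 : ∀ k, v (k + 1) + θ k ≤ v k + ε k := by
    intro k
    have h2 : (1 - δ k) * v k ≤ v k := by
      nlinarith [(hδ k).1, hv k]
    have := hrec k
    linarith
  -- partial sum inequality
  have hpart : ∀ n, v n + ∑ k ∈ Finset.range n, θ k ≤ v 0 + ∑ k ∈ Finset.range n, ε k := by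
    intro n
    induction n with
    | zero => simp
    | succ n ih =>
      rw [Finset.sum_range_succ, Finset.sum_range_succ]
      have := h1 n
      linarith
  have hεtsum : ∀ n, ∑ k ∈ Finset.range n, ε k ≤ ∑' k, ε k := fun n =>
    Summable.sum_le_tsum (Finset.range n) (fun i _ => hε i) hεsum
  have hbdd : ∀ k, v k ≤ v 0 + ∑' k, ε k := by
    intro k
    have h2 := hpart k
    have h3 : (0:ℝ) ≤ ∑ j ∈ Finset.range k, θ j :=
      Finset.sum_nonneg fun i _ => hθ i
    have := hεtsum k
    linarith
  refine ⟨⟨v 0 + ∑' k, ε k, hbdd⟩, ?_, ?_⟩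
  · -- convergence: w k = v k + tail sum
    set w : ℕ → ℝ := fun k => v k + ∑' j, ε (j + k) with hw
    have htail : ∀ k, Summable fun j => ε (j + k) := by
      intro k
      exact (summable_nat_add_iff k).2 hεsum
    have hanti : Antitone w := by
      apply antitone_nat_of_succ_le
      intro k
      have hsplit : ∑' j, ε (j + k) = ε k + ∑' j, ε (j + (k + 1)) := by
        rw [Summable.tsum_eq_zero_add (htail k)]
        simp [add_assoc, add_comm 1 k]
      have h2 := h1 k
      have hθk := hθ k
      simp only [hw, hsplit]
      linarith
    have hwnonneg : ∀ k, 0 ≤ w k := by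
      intro k
      exact add_nonneg (hv k) (tsum_nonneg fun j => hε _)
    have hbb : BddBelow (Set.range w) := ⟨0, by rintro x ⟨k, rfl⟩; exact hwnonneg k⟩
    have hwt : Tendsto w atTop (nhds (⨅ k, w k)) := tendsto_atTop_ciInf hanti hbb
    have htail0 : Tendsto (fun k => ∑' j, ε (j + k)) atTop (nhds 0) :=
      tendsto_sum_nat_add ε
    have hvt : Tendsto v atTop (nhds (⨅ k, w k)) := by
      have : Tendsto (fun k => w k - ∑' j, ε (j + k)) atTop (nhds ((⨅ k, w k) - 0)) :=
        hwt.sub htail0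
      simpa [hw] using this
    refine ⟨⨅ k, w k, ?_, hvt⟩
    exact ge_of_tendsto' hvt hv
  · -- summable θ
    have hb : ∀ n, ∑ i ∈ Finset.range n, θ i ≤ v 0 + ∑' k, ε k := by
      intro n
      have := hpart n
      have := hεtsum n
      have := hv n
      linarith
    exact summable_of_sum_range_le hθ hb
end

section
/- Let (v^k) be a sequence of nonnegative real numbers such that v^{k+1} ≤ (1−δ^k) v^k + δ^k (β^k + η^k) for all k ∈ ℕ, where (δ^k), (β^k), (η^k) are sequences of nonnegative real numbers satisfying: (1) ∑_{k=1}^∞ δ^k = ∞ and lim_{k→∞} δ^k = 0; (2) lim_{k→∞} β^k = 0; and (3) ∑_{k=1}^∞ δ^k η^k < ∞. Then lim_{k→∞} v^k = 0. -/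
open Filter

/-- Proposition 3 of Lei–Shanbhag (2020). -/
theorem stmt_8 (v δ β η : ℕ → ℝ)
    (hv : ∀ k, 0 ≤ v k) (hδ : ∀ k, 0 ≤ δ k) (hβ : ∀ k, 0 ≤ β k) (hη : ∀ k, 0 ≤ η k)
    (hrec : ∀ k, v (k + 1) ≤ (1 - δ k) * v k + δ k * (β k + η k))
    (hδdiv : ¬ Summable δ) (hδlim : Tendsto δ atTop (nhds 0))
    (hβlim : Tendsto β atTop (nhds 0))
    (hδη : Summable (fun k => δ k * η k)) :
    Tendsto v atTop (nhds 0) := by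
  rw [Metric.tendsto_atTop]
  intro ε hε
  have hε4 : (0:ℝ) < ε / 4 := by linarith
  -- choose thresholds
  obtain ⟨K1, hK1⟩ : ∃ N, ∀ k ≥ N, β k ≤ ε / 4 := by
    have := (hβlim.eventually_lt_const hε4)
    rw [eventually_atTop] at this
    obtain ⟨N, hN⟩ := this
    exact ⟨N, fun k hk => (hN k hk).le⟩
  obtain ⟨K2, hK2⟩ : ∃ N, ∀ k ≥ N, δ k ≤ 1 := by
    have := (hδlim.eventually_lt_const (by norm_num : (0:ℝ) < 1))
    rw [eventually_atTop] at this
    obtain ⟨N, hN⟩ := this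
    exact ⟨N, fun k hk => (hN k hk).le⟩
  obtain ⟨K3, hK3⟩ : ∃ N, ∀ i ≥ N, ∑' k, δ (k + i) * η (k + i) ≤ ε / 4 := by
    have h := (tendsto_sum_nat_add (f := fun k => δ k * η k)).eventually_lt_const hε4
    rw [eventually_atTop] at h
    obtain ⟨N, hN⟩ := h
    exact ⟨N, fun i hi => (hN i hi).le⟩
  set K := max K1 (max K2 K3) with hK
  have hKK1 : K1 ≤ K := le_max_left _ _
  have hKK2 : K2 ≤ K := le_trans (le_max_left _ _) (le_max_right _ _)
  have hKK3 : K3 ≤ K := le_trans (le_max_right _ _) (le_max_right _ _)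
  have hδ1 : ∀ k ≥ K, δ k ≤ 1 := fun k hk => hK2 k (le_trans hKK2 hk)
  -- tail sum bound for any n
  have htail : ∀ n, ∑ k ∈ Finset.Ico K n, δ k * η k ≤ ε / 4 := by
    intro n
    have h1 : ∑ k ∈ Finset.Ico K n, δ k * η k ≤ ∑' k, δ (k + K) * η (k + K) := by
      rcases le_or_gt K n with h | h
      · have he : ∑ k ∈ Finset.Ico K n, δ k * η k
            = ∑ k ∈ Finset.range (n - K), δ (k + K) * η (k + K) := by
          rw [Finset.sum_Ico_eq_sum_range]
          apply Finset.sum_congr rfl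
          intro i _
          rw [add_comm K i]
        rw [he]
        exact Summable.sum_le_tsum _ (fun i _ => mul_nonneg (hδ _) (hη _))
          ((summable_nat_add_iff K).2 hδη)
      · rw [Finset.Ico_eq_empty (by omega), Finset.sum_empty]
        exact tsum_nonneg (fun i => mul_nonneg (hδ _) (hη _))
    linarith [hK3 K hKK3]
  -- key induction
  have hkey : ∀ n ≥ K, v n ≤ (∏ k ∈ Finset.Ico K n, (1 - δ k)) * v K + ε / 4
      + ∑ k ∈ Finset.Ico K n, δ k * η k := by
    intro n hn
    induction n, hn using Nat.le_induction with
    | base => simp; linarith [hv K, hε4]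
    | succ n hn ih =>
      have hsumnn : 0 ≤ ∑ k ∈ Finset.Ico K n, δ k * η k :=
        Finset.sum_nonneg (fun k _ => mul_nonneg (hδ _) (hη _))
      have hβn : β n ≤ ε / 4 := hK1 n (le_trans hKK1 hn)
      have hδn0 : 0 ≤ δ n := hδ n
      have hδn1 : δ n ≤ 1 := hδ1 n hn
      rw [Finset.prod_Ico_succ_top hn, Finset.sum_Ico_succ_top hn]
      have h1 : (1 - δ n) * v n ≤ (1 - δ n) *
          ((∏ k ∈ Finset.Ico K n, (1 - δ k)) * v K + ε / 4
            + ∑ k ∈ Finset.Ico K n, δ k * η k) :=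
        mul_le_mul_of_nonneg_left ih (by linarith)
      have h2 : δ n * (β n + η n) ≤ δ n * (ε / 4) + δ n * η n := by
        rw [mul_add]
        have := mul_le_mul_of_nonneg_left hβn hδn0
        linarith
      calc v (n + 1) ≤ (1 - δ n) * v n + δ n * (β n + η n) := hrec n
        _ ≤ (1 - δ n) * ((∏ k ∈ Finset.Ico K n, (1 - δ k)) * v K + ε / 4
              + ∑ k ∈ Finset.Ico K n, δ k * η k) + (δ n * (ε / 4) + δ n * η n) :=
            add_le_add h1 h2
        _ = ((∏ k ∈ Finset.Ico K n, (1 - δ k)) * (1 - δ n)) * v K + ε / 4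
              + ((∑ k ∈ Finset.Ico K n, δ k * η k) + δ n * η n)
              - δ n * ∑ k ∈ Finset.Ico K n, δ k * η k := by ring
        _ ≤ ((∏ k ∈ Finset.Ico K n, (1 - δ k)) * (1 - δ n)) * v K + ε / 4
              + ((∑ k ∈ Finset.Ico K n, δ k * η k) + δ n * η n) := by
            linarith [mul_nonneg hδn0 hsumnn]
  -- divergence of tail sums of δ
  have hSdiv : Tendsto (fun n => ∑ k ∈ Finset.Ico K n, δ k) atTop atTop := by
    have h := (not_summable_iff_tendsto_nat_atTop_of_nonneg hδ).1 hδdiv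
    have hge : ∀ n, (∑ k ∈ Finset.range n, δ k)
        - ∑ k ∈ Finset.range K, δ k ≤ ∑ k ∈ Finset.Ico K n, δ k := by
      intro n
      rcases le_or_gt K n with h' | h'
      · rw [Finset.sum_Ico_eq_sub _ h']
      · rw [Finset.Ico_eq_empty (by omega), Finset.sum_empty]
        have : ∑ k ∈ Finset.range n, δ k ≤ ∑ k ∈ Finset.range K, δ k :=
          Finset.sum_le_sum_of_subset_of_nonneg
            (Finset.range_subset_range.2 h'.le) (fun i _ _ => hδ i)
        linarith
    exact tendsto_atTop_mono hge (tendsto_atTop_add_const_right _ _ h)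
  -- the product term tends to zero
  have hprodlim : Tendsto (fun n => (∏ k ∈ Finset.Ico K n, (1 - δ k)) * v K)
      atTop (nhds 0) := by
    have hbound : ∀ n, (∏ k ∈ Finset.Ico K n, (1 - δ k)) * v K
        ≤ Real.exp (-(∑ k ∈ Finset.Ico K n, δ k)) * v K := by
      intro n
      apply mul_le_mul_of_nonneg_right _ (hv K)
      calc ∏ k ∈ Finset.Ico K n, (1 - δ k)
          ≤ ∏ k ∈ Finset.Ico K n, Real.exp (-(δ k)) := by
            apply Finset.prod_le_prod
            · intro k hk
              have := hδ1 k (Finset.mem_Ico.1 hk).1; linarith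
            · intro k _
              have := Real.add_one_le_exp (-(δ k)); linarith
        _ = Real.exp (∑ k ∈ Finset.Ico K n, -(δ k)) := (Real.exp_sum _ _).symm
        _ = Real.exp (-(∑ k ∈ Finset.Ico K n, δ k)) := by rw [Finset.sum_neg_distrib]
    have hlow : ∀ n, 0 ≤ (∏ k ∈ Finset.Ico K n, (1 - δ k)) * v K := by
      intro n
      refine mul_nonneg (Finset.prod_nonneg fun k hk => ?_) (hv K)
      have := hδ1 k (Finset.mem_Ico.1 hk).1; linarith
    have hup : Tendsto (fun n => Real.exp (-(∑ k ∈ Finset.Ico K n, δ k)) * v K)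
        atTop (nhds 0) := by
      have h : Tendsto (fun n => Real.exp (-(∑ k ∈ Finset.Ico K n, δ k)))
          atTop (nhds 0) := Real.tendsto_exp_atBot.comp (tendsto_neg_atTop_atBot.comp hSdiv)
      simpa using h.mul_const (v K)
    exact squeeze_zero hlow hbound hup
  have hev := hprodlim.eventually_lt_const (by linarith : (0:ℝ) < ε / 2)
  rw [eventually_atTop] at hev
  obtain ⟨N, hN⟩ := hev
  refine ⟨max N K, fun n hn => ?_⟩
  have hnK : n ≥ K := le_trans (le_max_right _ _) hn
  have hnN : n ≥ N := le_trans (le_max_left _ _) hn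
  have h1 := hkey n hnK
  have h2 := htail n
  have h3 := hN n hnN
  rw [Real.dist_eq, sub_zero, abs_of_nonneg (hv n)]
  linarith
end

section
/- Let (v^k) and (ε^k) be sequences of nonnegative real numbers such that v^{k+1} − v^k ≤ δ^k (v^k − v^{k−1}) + ε^k for all k ≥ 1, where (1) ∑_{k=1}^∞ ε^k < ∞ and (2) δ^k ∈ [0, δ] for all k, for some δ ∈ [0,1). Then (v^k) converges and ∑_{k=1}^∞ max(v^{k+1} − v^k, 0) < ∞. -/
open Filter

/-- Lemma 2.2 of Maingé (2008). -/
theorem stmt_13 (v ε δ : ℕ → ℝ) (d : ℝ)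
    (hv : ∀ k, 0 ≤ v k) (hε : ∀ k, 0 ≤ ε k)
    (hεsum : Summable ε)
    (hd : 0 ≤ d ∧ d < 1)
    (hδ : ∀ k, 0 ≤ δ k ∧ δ k ≤ d)
    (hrec : ∀ k, 1 ≤ k → v (k + 1) - v k ≤ δ k * (v k - v (k - 1)) + ε k) :
    (∃ L, Tendsto v atTop (nhds L)) ∧
    Summable (fun k => max (v (k + 1) - v k) 0) := by
  obtain ⟨hd0, hd1⟩ := hd
  set a : ℕ → ℝ := fun k => max (v (k + 1) - v k) 0 with ha
  have ha0 : ∀ k, 0 ≤ a k := fun k => le_max_right _ _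
  have hav : ∀ k, v (k + 1) - v k ≤ a k := fun k => le_max_left _ _
  have hstep : ∀ k, a (k + 1) ≤ d * a k + ε (k + 1) := by
    intro k
    have h1 := hrec (k + 1) (by omega)
    simp only [Nat.add_sub_cancel] at h1
    have h2 : δ (k + 1) * (v (k + 1) - v k) ≤ d * a k :=
      calc δ (k + 1) * (v (k + 1) - v k) ≤ δ (k + 1) * a k :=
            mul_le_mul_of_nonneg_left (hav k) (hδ (k + 1)).1
        _ ≤ d * a k := mul_le_mul_of_nonneg_right (hδ (k + 1)).2 (ha0 k)
    have h3 : v (k + 1 + 1) - v (k + 1) ≤ d * a k + ε (k + 1) := le_trans h1 (by linarith)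
    exact max_le h3 (add_nonneg (mul_nonneg hd0 (ha0 k)) (hε _))
  set E := ∑' k, ε k with hEdef
  have hE : ∀ n, ∑ i ∈ Finset.range n, ε i ≤ E := fun n =>
    Summable.sum_le_tsum _ (fun i _ => hε i) hεsum
  have hE0 : 0 ≤ E := tsum_nonneg hε
  have hbound : ∀ n, ∑ i ∈ Finset.range n, a i ≤ (a 0 + E) / (1 - d) := by
    intro n
    have key : ∑ i ∈ Finset.range n, a i ≤ a 0 + d * ∑ i ∈ Finset.range n, a i + E := by
      cases n with
      | zero =>
        simp
        positivity
      | succ m =>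
        have h1 : ∑ i ∈ Finset.range m, a (i + 1) ≤
            ∑ i ∈ Finset.range m, (d * a i + ε (i + 1)) :=
          Finset.sum_le_sum fun i _ => hstep i
        rw [Finset.sum_add_distrib, ← Finset.mul_sum] at h1
        have h2 : ∑ i ∈ Finset.range m, a i ≤ ∑ i ∈ Finset.range (m + 1), a i :=
          Finset.sum_le_sum_of_subset_of_nonneg
            (Finset.range_subset_range.2 (by omega)) (fun i _ _ => ha0 i)
        have h3 : ∑ i ∈ Finset.range m, ε (i + 1) ≤ E := by
          have h4 := hE (m + 1)
          rw [Finset.sum_range_succ'] at h4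
          linarith [hε 0]
        have h5 := mul_le_mul_of_nonneg_left h2 hd0
        have h6 : ∑ i ∈ Finset.range (m + 1), a i
            = ∑ k ∈ Finset.range m, a (k + 1) + a 0 := Finset.sum_range_succ' a m
        linarith
    rw [le_div_iff₀ (by linarith)]
    linarith
  have hsuma : Summable a := summable_of_sum_range_le ha0 hbound
  refine ⟨?_, hsuma⟩
  set S : ℕ → ℝ := fun n => ∑ i ∈ Finset.range n, a i with hSdef
  set w : ℕ → ℝ := fun n => v n - S n with hwdef
  have hw_anti : Antitone w := by
    apply antitone_nat_of_succ_le
    intro n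
    have h1 : S (n + 1) = S n + a n := Finset.sum_range_succ a n
    have := hav n
    simp only [hwdef, h1]
    linarith
  have hw_bdd : BddBelow (Set.range w) := by
    refine ⟨-(∑' k, a k), ?_⟩
    rintro x ⟨n, rfl⟩
    have h1 : S n ≤ ∑' k, a k := Summable.sum_le_tsum _ (fun i _ => ha0 i) hsuma
    have := hv n
    simp only [hwdef]
    linarith
  have htw : Tendsto w atTop (nhds (⨅ n, w n)) := tendsto_atTop_ciInf hw_anti hw_bdd
  have htS : Tendsto S atTop (nhds (∑' k, a k)) := hsuma.hasSum.tendsto_sum_nat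
  refine ⟨(⨅ n, w n) + ∑' k, a k, ?_⟩
  have := htw.add htS
  exact this.congr fun n => by simp [hwdef]
end

section
/- Let (v^k) and (β^k) be two sequences of nonnegative real numbers, and suppose there exist constants γ > 1 and δ > 0 such that γ v^{k+1} + β^{k+1} ≤ v^k + β^k and δ β^k ≤ v^k for all k ∈ ℕ. Then (v^k) and (β^k) converge to zero with R-linear rate, i.e., there exist constants c > 0 and q ∈ (0,1) such that v^k ≤ c q^k and β^k ≤ c q^k for all k ∈ ℕ. -/
/-!
The sum `v k + β k` contracts geometrically: since `δ β ≤ v`, the surplus `(γ - 1) v`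
covers the fraction `(γ - 1) δ / (1 + δ)` of `v + β`, so
`v (k+1) + β (k+1) ≤ q (v k + β k)` with `q = (1 + δ) / (1 + γ δ) < 1`.
Both nonnegative sequences are bounded by this sum.
-/

lemma one_add_mul_mul_add_le {γ δ x y : ℝ} (hγ : 1 ≤ γ) (hyx : δ * y ≤ x) :
    (1 + γ * δ) * (x + y) ≤ (1 + δ) * (γ * x + y) := by
  nlinarith [mul_nonneg (sub_nonneg.2 hγ) (sub_nonneg.2 hyx)]

lemma add_succ_le_div_mul_add {v β : ℕ → ℝ} {γ δ : ℝ} (hγ : 1 ≤ γ) (hδ : 0 ≤ δ)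
    (hrec : ∀ k, γ * v (k + 1) + β (k + 1) ≤ v k + β k) (hβv : ∀ k, δ * β k ≤ v k) (k : ℕ) :
    v (k + 1) + β (k + 1) ≤ (1 + δ) / (1 + γ * δ) * (v k + β k) := by
  have hpos : 0 < 1 + γ * δ := by positivity
  rw [div_mul_eq_mul_div, le_div_iff₀ hpos, mul_comm]
  calc (1 + γ * δ) * (v (k + 1) + β (k + 1))
      ≤ (1 + δ) * (γ * v (k + 1) + β (k + 1)) := one_add_mul_mul_add_le hγ (hβv _)
    _ ≤ (1 + δ) * (v k + β k) := mul_le_mul_of_nonneg_left (hrec k) (by positivity)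

/-- Lemma 2.7 of Malitsky–Tam (2018): R-linear convergence. -/
theorem stmt_14 (v β : ℕ → ℝ) (γ δ : ℝ)
    (hv : ∀ k, 0 ≤ v k) (hβ : ∀ k, 0 ≤ β k)
    (hγ : 1 < γ) (hδ : 0 < δ)
    (hrec : ∀ k, γ * v (k + 1) + β (k + 1) ≤ v k + β k)
    (hβv : ∀ k, δ * β k ≤ v k) :
    ∃ c > 0, ∃ q, 0 < q ∧ q < 1 ∧ ∀ k, v k ≤ c * q ^ k ∧ β k ≤ c * q ^ k := by
  set q := (1 + δ) / (1 + γ * δ)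
  have hq : 0 < q := by positivity
  have hq1 : q < 1 := (div_lt_one (by positivity)).2 (by nlinarith)
  have hsum (k : ℕ) : v k + β k ≤ (v 0 + β 0 + 1) * q ^ k :=
    calc v k + β k ≤ q ^ k * (v 0 + β 0) :=
          le_geom (u := fun j ↦ v j + β j) hq.le k
            fun j _ ↦ add_succ_le_div_mul_add hγ.le hδ.le hrec hβv j
      _ ≤ (v 0 + β 0 + 1) * q ^ k := by
        rw [mul_comm]; exact mul_le_mul_of_nonneg_right (by linarith) (by positivity)
  refine ⟨v 0 + β 0 + 1, by linarith [hv 0, hβ 0], q, hq, hq1, fun k ↦ ⟨?_, ?_⟩⟩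
  · linarith [hsum k, hβ k]
  · linarith [hsum k, hv k]
end

section
/- Let S be a nonempty subset of ℝ^n and let (x^k) be a sequence in ℝ^n that is quasi-Fejér monotone with respect to S. Then (x^k) converges to a point of S if and only if every sequential cluster point of (x^k) belongs to S. -/
open Filter

/-- If a sequence is quasi-Fejér w.r.t. a point p and a subsequence converges to p,
then the whole sequence converges to p. -/
lemma aux_qfejer_conv {E : Type*} [NormedAddCommGroup E]
    (x : ℕ → E) (p : E) (ε : ℕ → ℝ) (hε : ∀ k, 0 ≤ ε k) (hsum : Summable ε)
    (hin : ∀ k, ‖x (k + 1) - p‖ ≤ ‖x k - p‖ + ε k)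
    (φ : ℕ → ℕ) (hφ : StrictMono φ)
    (hconv : Tendsto (fun m => x (φ m)) atTop (nhds p)) :
    Tendsto x atTop (nhds p) := by
  set t : ℕ → ℝ := fun i => ∑' k, ε (k + i) with ht
  have hsumt : ∀ i, Summable (fun k => ε (k + i)) := fun i =>
    (summable_nat_add_iff i).mpr hsum
  have htnn : ∀ i, 0 ≤ t i := fun i => tsum_nonneg (fun k => hε (k + i))
  have htrec : ∀ i, t i = ε i + t (i + 1) := by
    intro i
    have h0 := Summable.tsum_eq_zero_add (hsumt i)
    simp only [zero_add] at h0
    rw [ht]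
    simp only
    rw [h0]
    congr 1
    apply tsum_congr
    intro k
    congr 1
    omega
  set b : ℕ → ℝ := fun k => ‖x k - p‖ + t k with hb
  have hbmono : Antitone b := by
    apply antitone_nat_of_succ_le
    intro k
    have := hin k
    have := htrec k
    simp only [hb]
    linarith
  have hbdd : BddBelow (Set.range b) := by
    refine ⟨0, ?_⟩
    rintro _ ⟨k, rfl⟩
    have := norm_nonneg (x k - p)
    have := htnn k
    simp only [hb]
    linarith
  have hbL : Tendsto b atTop (nhds (⨅ i, b i)) :=
    tendsto_atTop_ciInf hbmono hbdd
  have htzero : Tendsto t atTop (nhds 0) := tendsto_sum_nat_add ε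
  have haconv : Tendsto (fun k => ‖x k - p‖) atTop (nhds (⨅ i, b i)) := by
    have h : Tendsto (fun k => b k - t k) atTop (nhds ((⨅ i, b i) - 0)) :=
      hbL.sub htzero
    have heq : (fun k => ‖x k - p‖) = fun k => b k - t k := by
      funext k; simp [hb]
    rw [heq]
    simpa using h
  -- subsequence of norms tends to 0
  have hsubnorm : Tendsto (fun m => ‖x (φ m) - p‖) atTop (nhds 0) := by
    have := (tendsto_iff_norm_sub_tendsto_zero).mp hconv
    simpa using this
  have hsubL : Tendsto (fun m => ‖x (φ m) - p‖) atTop (nhds (⨅ i, b i)) :=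
    haconv.comp hφ.tendsto_atTop
  have hL0 : (⨅ i, b i) = 0 := tendsto_nhds_unique hsubL hsubnorm
  rw [tendsto_iff_norm_sub_tendsto_zero]
  rw [hL0] at haconv
  exact haconv

/-- Theorem 3.8 of Combettes (2001): a quasi-Fejér monotone sequence converges to a
point of the target set iff all its sequential cluster points belong to it. -/
theorem stmt_16 (n : ℕ) (S : Set (EuclideanSpace ℝ (Fin n))) (hS : S.Nonempty)
    (x : ℕ → EuclideanSpace ℝ (Fin n))
    (hqfejer : ∀ y ∈ S, ∃ ε : ℕ → ℝ, (∀ k, 0 ≤ ε k) ∧ Summable ε ∧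
      ∀ k, ‖x (k + 1) - y‖ ≤ ‖x k - y‖ + ε k) :
    (∃ p ∈ S, Tendsto x atTop (nhds p)) ↔
      (∀ p, (∃ φ : ℕ → ℕ, StrictMono φ ∧ Tendsto (fun m => x (φ m)) atTop (nhds p)) →
        p ∈ S) := by
  constructor
  · rintro ⟨p, hpS, hp⟩ q ⟨φ, hφ, hq⟩
    have : Tendsto (fun m => x (φ m)) atTop (nhds p) := hp.comp hφ.tendsto_atTop
    rwa [tendsto_nhds_unique hq this]
  · intro hcluster
    obtain ⟨y, hyS⟩ := hS
    obtain ⟨ε, hε, hsum, hin⟩ := hqfejer y hyS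
    have hbnd : ∀ k, ‖x k - y‖ ≤ ‖x 0 - y‖ + ∑' j, ε j := by
      have key : ∀ k, ‖x k - y‖ ≤ ‖x 0 - y‖ + ∑ j ∈ Finset.range k, ε j := by
        intro k
        induction k with
        | zero => simp
        | succ k ih =>
          have h1 := hin k
          rw [Finset.sum_range_succ]
          linarith
      intro k
      have h2 : ∑ j ∈ Finset.range k, ε j ≤ ∑' j, ε j :=
        Summable.sum_le_tsum (Finset.range k) (fun i _ => hε i) hsum
      linarith [key k]
    -- extract a convergent subsequence
    have hmem : ∀ k, x k ∈ Metric.closedBall y (‖x 0 - y‖ + ∑' j, ε j) := by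
      intro k
      rw [Metric.mem_closedBall, dist_eq_norm]
      exact hbnd k
    obtain ⟨p, -, φ, hφ, hconv⟩ :=
      tendsto_subseq_of_bounded Metric.isBounded_closedBall hmem
    have hpS : p ∈ S := hcluster p ⟨φ, hφ, hconv⟩
    obtain ⟨ε', hε', hsum', hin'⟩ := hqfejer p hpS
    exact ⟨p, hpS, aux_qfejer_conv x p ε' hε' hsum' hin' φ hφ hconv⟩
end

section
/- (Opial Lemma) Let (x^k) be a bounded sequence in ℝ^n and let X ⊆ ℝ^n. Suppose that: (1) for every z ∈ X, the limit lim_{k→∞} ‖x^k − z‖ exists; and (2) every sequential cluster point of (x^k) belongs to X. Then (x^k) converges to a point of X. -/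
open Filter Topology

/- Since `(x^k)` is bounded in a proper space, it has a cluster point `p`, which lies in `X`.
Then `‖x^k - p‖` converges, and along the subsequence converging to `p` its limit is `0`;
hence `x^k → p`. -/

theorem tendsto_of_tendsto_comp_of_tendsto_dist {α β γ : Type*} [PseudoMetricSpace α]
    {l : Filter β} {l' : Filter γ} [NeBot l'] {x : β → α} {φ : γ → β} {p : α} {L : ℝ}
    (hφ : Tendsto φ l' l) (hsub : Tendsto (x ∘ φ) l' (𝓝 p))
    (hdist : Tendsto (fun k => dist (x k) p) l (𝓝 L)) : Tendsto x l (𝓝 p) := by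
  have hL : L = 0 :=
    tendsto_nhds_unique (hdist.comp hφ) (tendsto_iff_dist_tendsto_zero.1 hsub)
  exact tendsto_iff_dist_tendsto_zero.2 (hL ▸ hdist)

/-- Opial's Lemma. -/
theorem stmt_17 (n : ℕ) (X : Set (EuclideanSpace ℝ (Fin n)))
    (x : ℕ → EuclideanSpace ℝ (Fin n))
    (hbdd : ∃ M, ∀ k, ‖x k‖ ≤ M)
    (hlim : ∀ z ∈ X, ∃ L, Tendsto (fun k => ‖x k - z‖) atTop (nhds L))
    (hcluster : ∀ p, (∃ φ : ℕ → ℕ, StrictMono φ ∧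
      Tendsto (fun m => x (φ m)) atTop (nhds p)) → p ∈ X) :
    ∃ p ∈ X, Tendsto x atTop (nhds p) := by
  obtain ⟨p, -, φ, hφ, hxp⟩ :=
    tendsto_subseq_of_bounded (isBounded_iff_forall_norm_le.2 (by simpa using hbdd))
      (Set.mem_range_self (f := x))
  have hpX : p ∈ X := hcluster p ⟨φ, hφ, hxp⟩
  obtain ⟨L, hL⟩ := hlim p hpX
  simp_rw [← dist_eq_norm] at hL
  exact ⟨p, hpX, tendsto_of_tendsto_comp_of_tendsto_dist hφ.tendsto_atTop hxp hL⟩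
end

section
/- (Robbins–Siegmund Lemma) Let (Ω, F, P) be a probability space with a filtration (F_k), and let (v^k), (θ^k), (ε^k) and (δ^k) be sequences of nonnegative integrable random variables adapted to (F_k) such that, almost surely, ∑_{k=0}^∞ ε^k < ∞, ∑_{k=0}^∞ δ^k < ∞, and E[v^{k+1} | F_k] ≤ (1+δ^k) v^k + ε^k − θ^k for all k ∈ ℕ. Then, almost surely, ∑_{k=0}^∞ θ^k < ∞ and the sequence (v^k) converges to a nonnegative random variable. -/
/-!
Dividing by the products `P n = ∏ k < n, (1 + δ k)` turns the recursion into the supermartingale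
`u n = v n / P n + ∑ k < n, (θ k - ε k) / P (k + 1)`, which is bounded below by the predictable,
nondecreasing process `-∑ k < n, ε k / P (k + 1)`. Stopping `u` when this bound drops below `-a`
gives supermartingales bounded below, so `u` converges almost surely where `∑ ε k < ∞`. As `P n`
converges where `∑ δ k < ∞`, the convergence of `u` yields the summability of `θ` and the
convergence of `v`.
-/

open Filter MeasureTheory Finset Topology

theorem sum_range_ite_mul_sub_of_antitone {x : ℕ → ℝ} {p : ℕ → Prop} [DecidablePred p]
    (hp : Antitone p) {n : ℕ} (hn : p n) :
    ∑ k ∈ range n, (if p (k + 1) then 1 else 0) * (x (k + 1) - x k) = x n - x 0 := by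
  rw [← sum_range_sub]
  refine sum_congr rfl fun k hk => ?_
  rw [if_pos (hp (mem_range.1 hk) hn), one_mul]

theorem exists_sum_range_ite_mul_sub_eq {x : ℕ → ℝ} {p : ℕ → Prop} [DecidablePred p]
    (hp : Antitone p) (n : ℕ) :
    ∃ m, (m = 0 ∨ p m) ∧
      ∑ k ∈ range n, (if p (k + 1) then 1 else 0) * (x (k + 1) - x k) = x m - x 0 := by
  induction n with
  | zero => exact ⟨0, Or.inl rfl, by simp⟩
  | succ n ih =>
    by_cases hn : p (n + 1)
    · exact ⟨n + 1, Or.inr hn, sum_range_ite_mul_sub_of_antitone hp hn⟩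
    · rwa [sum_range_succ, if_neg hn, zero_mul, add_zero]

theorem summable_and_tendsto_of_tendsto_add_sum {a t : ℕ → ℝ} {l : ℝ} (ha : ∀ n, 0 ≤ a n)
    (ht : ∀ n, 0 ≤ t n) (h : Tendsto (fun n => a n + ∑ k ∈ range n, t k) atTop (𝓝 l)) :
    Summable t ∧ Tendsto a atTop (𝓝 (l - ∑' k, t k)) := by
  obtain ⟨C, hC⟩ := h.bddAbove_range
  have hs : Summable t := summable_of_sum_range_le ht fun n =>
    (le_add_of_nonneg_left (ha n)).trans (hC ⟨n, rfl⟩)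
  exact ⟨hs, (h.sub hs.hasSum.tendsto_sum_nat).congr fun n => add_sub_cancel_right _ _⟩

namespace MeasureTheory

variable {Ω : Type*} {m0 : MeasurableSpace Ω} {μ : Measure Ω}

theorem condExp_mul_add_le {m : MeasurableSpace Ω} (hm : m ≤ m0) [SigmaFinite (μ.trim hm)]
    {w X Y g : Ω → ℝ}
    (hw : StronglyMeasurable[m] w) (hw0 : 0 ≤ w) (hY : StronglyMeasurable[m] Y)
    (hwX : Integrable (w * X) μ) (hX : Integrable X μ) (hYi : Integrable Y μ)
    (hXg : μ[X|m] ≤ᵐ[μ] g) :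
    μ[w * X + Y|m] ≤ᵐ[μ] w * g + Y := by
  filter_upwards [condExp_add hwX hYi m, condExp_mul_of_stronglyMeasurable_left hw hwX hX, hXg]
    with ω hadd hmul hle
  rw [hadd, Pi.add_apply, hmul, condExp_of_stronglyMeasurable hm hY hYi]
  simp only [Pi.mul_apply, Pi.add_apply]
  gcongr
  exact hw0 ω

variable {ℱ : Filtration ℕ m0}

theorem Submartingale.exists_ae_tendsto_of_le [IsProbabilityMeasure μ] {f : ℕ → Ω → ℝ} {R : ℝ}
    (hf : Submartingale f ℱ μ) (hbdd : ∀ n ω, f n ω ≤ R) :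
    ∀ᵐ ω ∂μ, ∃ c, Tendsto (fun n => f n ω) atTop (𝓝 c) := by
  set C := |∫ ω, f 0 ω ∂μ|
  set g : ℕ → Ω → ℝ := f + fun _ _ => C
  have hg : Submartingale g ℱ μ := hf.add_martingale (martingale_const ℱ μ C)
  have hbdd' : ∀ n, eLpNorm (g n) 1 μ ≤ (2 * (R + C).toNNReal : NNReal) := by
    intro n
    have hint : 0 ≤ ∫ ω, g n ω ∂μ := by
      have h0n := hf.setIntegral_le (Nat.zero_le n) MeasurableSet.univ
      rw [setIntegral_univ, setIntegral_univ] at h0n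
      simp only [g, Pi.add_apply]
      rw [integral_add (hf.integrable n) (integrable_const C), integral_const, probReal_univ,
        one_smul]
      linarith [neg_abs_le (∫ ω, f 0 ω ∂μ)]
    refine (eLpNorm_one_le_of_le' (hg.integrable n) hint
      (ae_of_all _ fun ω => add_le_add_left (hbdd n ω) C)).trans ?_
    simp [ENNReal.ofReal]
  filter_upwards [hg.exists_ae_tendsto_of_bdd hbdd'] with ω ⟨c, hc⟩
  exact ⟨c - C, by simpa [g] using hc.sub_const C⟩

theorem Supermartingale.exists_tendsto_of_le_of_neg_le [IsProbabilityMeasure μ]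
    {u B : ℕ → Ω → ℝ} (hu : Supermartingale u ℱ μ) (hB : Adapted ℱ fun n => B (n + 1))
    (hB_mono : ∀ ω, Monotone fun n => B n ω) (hle : ∀ n ω, -B n ω ≤ u n ω) (a : ℝ) :
    ∀ᵐ ω ∂μ, (∀ n, B n ω ≤ a) → |u 0 ω| ≤ a → ∃ c, Tendsto (fun n => u n ω) atTop (𝓝 c) := by
  classical
  -- Stop `u` as soon as `B` exceeds `a`, and freeze it entirely when `|u 0| > a`: the stopped
  -- process, written as a martingale transform of `-u`, is a submartingale bounded by `2 |a|`.
  let good (n : ℕ) (ω : Ω) : Prop := B n ω ≤ a ∧ |u 0 ω| ≤ a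
  have hgood : ∀ ω, Antitone fun n => good n ω := fun ω =>
    antitone_nat_of_succ_le fun n h => ⟨(hB_mono ω n.le_succ).trans h.1, h.2⟩
  let ξ (n : ℕ) (ω : Ω) : ℝ := if good n ω then 1 else 0
  let g (n : ℕ) : Ω → ℝ := ∑ k ∈ range n, ξ (k + 1) * ((-u) (k + 1) - (-u) k)
  have hg_apply : ∀ n ω, g n ω =
      ∑ k ∈ range n, (if good (k + 1) ω then 1 else 0) * (-u (k + 1) ω - -u k ω) := by
    intro n ω
    simp [g, ξ, Finset.sum_apply]
  have hξ : Adapted ℱ fun n => ξ (n + 1) := by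
    intro n
    have hu0 : Measurable[ℱ n] (u 0) :=
      ((hu.stronglyAdapted 0).mono (ℱ.mono n.zero_le)).measurable
    have hs : MeasurableSet[ℱ n] {ω | good (n + 1) ω} :=
      (measurableSet_le (hB n) measurable_const).inter
        (measurableSet_le (measurable_abs.comp hu0) measurable_const)
    exact Measurable.ite hs measurable_const measurable_const
  have hg : Submartingale g ℱ μ :=
    hu.neg.sum_mul_sub' hξ.stronglyAdapted (R := 1)
      (fun n ω => by simp only [ξ]; split <;> norm_num)
      (fun n ω => by simp only [ξ]; split <;> norm_num)
  have hg_le : ∀ n ω, g n ω ≤ 2 * |a| := by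
    intro n ω
    obtain ⟨m, hm | ⟨hBm, hu0⟩, hgm⟩ := exists_sum_range_ite_mul_sub_eq (x := fun k => -u k ω)
      (hgood ω) n
    · rw [hg_apply, hgm, hm, sub_self]
      positivity
    · rw [hg_apply, hgm]
      linarith [hle m ω, le_abs_self (u 0 ω), le_abs_self a]
  filter_upwards [hg.exists_ae_tendsto_of_le hg_le] with ω ⟨c, hc⟩ hBa hu0
  refine ⟨u 0 ω - c, (tendsto_const_nhds.sub hc).congr fun n => ?_⟩
  rw [hg_apply, sum_range_ite_mul_sub_of_antitone (x := fun k => -u k ω) (hgood ω) ⟨hBa n, hu0⟩]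
  ring

theorem Supermartingale.exists_tendsto_of_bddAbove_of_neg_le [IsProbabilityMeasure μ]
    {u B : ℕ → Ω → ℝ} (hu : Supermartingale u ℱ μ) (hB : Adapted ℱ fun n => B (n + 1))
    (hB_mono : ∀ ω, Monotone fun n => B n ω) (hle : ∀ n ω, -B n ω ≤ u n ω) :
    ∀ᵐ ω ∂μ, BddAbove (Set.range fun n => B n ω) →
      ∃ c, Tendsto (fun n => u n ω) atTop (𝓝 c) := by
  have h : ∀ᵐ ω ∂μ, ∀ a : ℕ, (∀ n, B n ω ≤ a) → |u 0 ω| ≤ a →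
      ∃ c, Tendsto (fun n => u n ω) atTop (𝓝 c) :=
    ae_all_iff.2 fun a => hu.exists_tendsto_of_le_of_neg_le hB hB_mono hle a
  filter_upwards [h] with ω hω ⟨b, hb⟩
  obtain ⟨a, ha⟩ := exists_nat_ge (max b |u 0 ω|)
  exact hω a (fun n => (hb ⟨n, rfl⟩).trans ((le_max_left _ _).trans ha))
    ((le_max_right _ _).trans ha)

end MeasureTheory

namespace RobbinsSiegmund

variable {Ω : Type*} {m0 : MeasurableSpace Ω} {v θ ε δ f : ℕ → Ω → ℝ}

def prodOneAdd (δ : ℕ → Ω → ℝ) (n : ℕ) (ω : Ω) : ℝ := ∏ k ∈ range n, (1 + δ k ω)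

noncomputable def discountedSum (f δ : ℕ → Ω → ℝ) (n : ℕ) (ω : Ω) : ℝ :=
  ∑ k ∈ range n, f k ω / prodOneAdd δ (k + 1) ω

noncomputable def scaledProcess (v θ ε δ : ℕ → Ω → ℝ) (n : ℕ) (ω : Ω) : ℝ :=
  v n ω / prodOneAdd δ n ω + discountedSum θ δ n ω - discountedSum ε δ n ω

section Pathwise

variable {ω : Ω}

theorem prodOneAdd_succ (n : ℕ) : prodOneAdd δ (n + 1) ω = prodOneAdd δ n ω * (1 + δ n ω) :=
  prod_range_succ _ _

theorem discountedSum_succ (n : ℕ) :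
    discountedSum f δ (n + 1) ω = discountedSum f δ n ω + f n ω / prodOneAdd δ (n + 1) ω :=
  sum_range_succ _ _

theorem one_le_prodOneAdd (hδ : ∀ k, 0 ≤ δ k ω) (n : ℕ) : 1 ≤ prodOneAdd δ n ω :=
  one_le_prod fun k _ => le_add_of_nonneg_right (hδ k)

theorem prodOneAdd_pos (hδ : ∀ k, 0 ≤ δ k ω) (n : ℕ) : 0 < prodOneAdd δ n ω :=
  one_pos.trans_le (one_le_prodOneAdd hδ n)

theorem div_prodOneAdd_nonneg (hδ : ∀ k, 0 ≤ δ k ω) {x : ℝ} (hx : 0 ≤ x) (n : ℕ) :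
    0 ≤ x / prodOneAdd δ n ω :=
  div_nonneg hx (prodOneAdd_pos hδ n).le

theorem exists_tendsto_prodOneAdd (hδ : Summable fun k => δ k ω) :
    ∃ P, Tendsto (fun n => prodOneAdd δ n ω) atTop (𝓝 P) :=
  ⟨_, (Real.multipliable_one_add_of_summable hδ).hasProd.tendsto_prod_nat⟩

theorem monotone_discountedSum (hδ : ∀ k, 0 ≤ δ k ω) (hf : ∀ k, 0 ≤ f k ω) :
    Monotone fun n => discountedSum f δ n ω :=
  monotone_nat_of_le_succ fun n => by
    rw [discountedSum_succ]
    exact le_add_of_nonneg_right (div_prodOneAdd_nonneg hδ (hf n) _)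

theorem summable_div_prodOneAdd (hδ : ∀ k, 0 ≤ δ k ω) (hf : ∀ k, 0 ≤ f k ω)
    (hfs : Summable fun k => f k ω) : Summable fun k => f k ω / prodOneAdd δ (k + 1) ω :=
  hfs.of_nonneg_of_le (fun k => div_prodOneAdd_nonneg hδ (hf k) _)
    fun k => div_le_self (hf k) (one_le_prodOneAdd hδ _)

theorem bddAbove_discountedSum (hδ : ∀ k, 0 ≤ δ k ω) (hf : ∀ k, 0 ≤ f k ω)
    (hfs : Summable fun k => f k ω) : BddAbove (Set.range fun n => discountedSum f δ n ω) :=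
  (summable_div_prodOneAdd hδ hf hfs).hasSum.tendsto_sum_nat.bddAbove_range

theorem neg_discountedSum_le_scaledProcess (hv : ∀ n, 0 ≤ v n ω) (hθ : ∀ k, 0 ≤ θ k ω)
    (hδ : ∀ k, 0 ≤ δ k ω) (n : ℕ) :
    -discountedSum ε δ n ω ≤ scaledProcess v θ ε δ n ω := by
  have h₁ := div_prodOneAdd_nonneg hδ (hv n) n
  have h₂ : 0 ≤ discountedSum θ δ n ω :=
    sum_nonneg fun k _ => div_prodOneAdd_nonneg hδ (hθ k) _
  rw [scaledProcess]
  linarith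

theorem summable_and_tendsto_of_tendsto_scaledProcess (hv : ∀ n, 0 ≤ v n ω)
    (hθ : ∀ k, 0 ≤ θ k ω) (hε : ∀ k, 0 ≤ ε k ω) (hδ : ∀ k, 0 ≤ δ k ω)
    (hεs : Summable fun k => ε k ω) (hδs : Summable fun k => δ k ω) {l : ℝ}
    (hl : Tendsto (fun n => scaledProcess v θ ε δ n ω) atTop (𝓝 l)) :
    (Summable fun k => θ k ω) ∧ ∃ L, 0 ≤ L ∧ Tendsto (fun n => v n ω) atTop (𝓝 L) := by
  have hsum : Tendsto (fun n => v n ω / prodOneAdd δ n ω + discountedSum θ δ n ω) atTop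
      (𝓝 (l + ∑' k, ε k ω / prodOneAdd δ (k + 1) ω)) :=
    (hl.add (summable_div_prodOneAdd hδ hε hεs).hasSum.tendsto_sum_nat).congr fun n => by
      simp only [scaledProcess, discountedSum]
      ring
  obtain ⟨hθs, hvP⟩ := summable_and_tendsto_of_tendsto_add_sum
    (fun n => div_prodOneAdd_nonneg hδ (hv n) n) (fun k => div_prodOneAdd_nonneg hδ (hθ k) _) hsum
  obtain ⟨P, hP⟩ := exists_tendsto_prodOneAdd hδs
  obtain ⟨M, hM⟩ := hP.bddAbove_range
  have hvL : Tendsto (fun n => v n ω) atTop (𝓝 _) :=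
    (hvP.mul hP).congr fun n => div_mul_cancel₀ _ (prodOneAdd_pos hδ n).ne'
  refine ⟨(hθs.mul_right M).of_nonneg_of_le hθ fun k => ?_, _, ge_of_tendsto' hvL hv, hvL⟩
  calc θ k ω = θ k ω / prodOneAdd δ (k + 1) ω * prodOneAdd δ (k + 1) ω :=
        (div_mul_cancel₀ _ (prodOneAdd_pos hδ _).ne').symm
    _ ≤ θ k ω / prodOneAdd δ (k + 1) ω * M :=
        mul_le_mul_of_nonneg_left (hM ⟨k + 1, rfl⟩) (div_prodOneAdd_nonneg hδ (hθ k) _)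

end Pathwise

section Filtered

variable {ℱ : Filtration ℕ m0} {μ : Measure Ω}

theorem measurable_prodOneAdd (hδ : Adapted ℱ δ) {n m : ℕ} (h : n ≤ m + 1) :
    Measurable[ℱ m] (prodOneAdd δ n) :=
  Finset.measurable_prod _ fun k hk =>
    (hδ.measurable_le (by have := mem_range.1 hk; omega)).const_add 1

theorem measurable_discountedSum (hf : Adapted ℱ f) (hδ : Adapted ℱ δ) {n m : ℕ}
    (h : n ≤ m + 1) : Measurable[ℱ m] (discountedSum f δ n) :=
  Finset.measurable_sum _ fun k hk => by
    have := mem_range.1 hk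
    exact (hf.measurable_le (by omega)).div (measurable_prodOneAdd hδ (by omega))

theorem adapted_scaledProcess (hv : Adapted ℱ v) (hθ : Adapted ℱ θ) (hε : Adapted ℱ ε)
    (hδ : Adapted ℱ δ) : Adapted ℱ (scaledProcess v θ ε δ) := fun n =>
  (((hv n).div (measurable_prodOneAdd hδ n.le_succ)).add
    (measurable_discountedSum hθ hδ n.le_succ)).sub (measurable_discountedSum hε hδ n.le_succ)

theorem integrable_div_prodOneAdd (hδ : Adapted ℱ δ) (hδ0 : ∀ k ω, 0 ≤ δ k ω) {g : Ω → ℝ}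
    (hg : Integrable g μ) (n : ℕ) : Integrable (fun ω => g ω / prodOneAdd δ n ω) μ := by
  simp_rw [div_eq_inv_mul]
  refine hg.bdd_mul (c := 1) ?_ (ae_of_all _ fun ω => ?_)
  · exact ((measurable_prodOneAdd hδ n.le_succ).mono (ℱ.le n) le_rfl).inv.aestronglyMeasurable
  · rw [norm_inv, Real.norm_of_nonneg (prodOneAdd_pos (hδ0 · ω) n).le]
    exact inv_le_one_of_one_le₀ (one_le_prodOneAdd (hδ0 · ω) n)

theorem integrable_discountedSum (hδ : Adapted ℱ δ) (hδ0 : ∀ k ω, 0 ≤ δ k ω)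
    (hf : ∀ k, Integrable (f k) μ) (n : ℕ) : Integrable (discountedSum f δ n) μ :=
  integrable_finsetSum _ fun k _ => integrable_div_prodOneAdd hδ hδ0 (hf k) (k + 1)

theorem integrable_scaledProcess (hδ : Adapted ℱ δ) (hδ0 : ∀ k ω, 0 ≤ δ k ω)
    (hv : ∀ n, Integrable (v n) μ) (hθ : ∀ k, Integrable (θ k) μ)
    (hε : ∀ k, Integrable (ε k) μ) (n : ℕ) : Integrable (scaledProcess v θ ε δ n) μ :=
  ((integrable_div_prodOneAdd hδ hδ0 (hv n) n).add (integrable_discountedSum hδ hδ0 hθ n)).sub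
    (integrable_discountedSum hδ hδ0 hε n)

theorem condExp_scaledProcess_succ_le [IsFiniteMeasure μ] (hθ : Adapted ℱ θ)
    (hε : Adapted ℱ ε) (hδ : Adapted ℱ δ) (hv_int : ∀ n, Integrable (v n) μ)
    (hθ_int : ∀ k, Integrable (θ k) μ) (hε_int : ∀ k, Integrable (ε k) μ)
    (hδ0 : ∀ k ω, 0 ≤ δ k ω) {k : ℕ}
    (hrec : μ[v (k + 1) | ℱ k] ≤ᵐ[μ] fun ω => (1 + δ k ω) * v k ω + ε k ω - θ k ω) :
    μ[scaledProcess v θ ε δ (k + 1) | ℱ k] ≤ᵐ[μ] scaledProcess v θ ε δ k := by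
  set w : Ω → ℝ := fun ω => (prodOneAdd δ (k + 1) ω)⁻¹
  set Y : Ω → ℝ := discountedSum θ δ (k + 1) - discountedSum ε δ (k + 1)
  have hw : StronglyMeasurable[ℱ k] w := (measurable_prodOneAdd hδ le_rfl).inv.stronglyMeasurable
  have hY : StronglyMeasurable[ℱ k] Y := ((measurable_discountedSum hθ hδ le_rfl).sub
    (measurable_discountedSum hε hδ le_rfl)).stronglyMeasurable
  have hwv : Integrable (w * v (k + 1)) μ := by
    simpa only [div_eq_inv_mul, w, Pi.mul_def] using
      integrable_div_prodOneAdd hδ hδ0 (hv_int (k + 1)) (k + 1)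
  have hsplit : scaledProcess v θ ε δ (k + 1) = w * v (k + 1) + Y := by
    funext ω
    simp only [scaledProcess, w, Y, Pi.add_apply, Pi.mul_apply, Pi.sub_apply]
    ring
  rw [hsplit]
  filter_upwards [condExp_mul_add_le (ℱ.le k) hw
    (fun ω => inv_nonneg.2 (prodOneAdd_pos (hδ0 · ω) _).le) hY hwv (hv_int _)
    ((integrable_discountedSum hδ hδ0 hθ_int _).sub (integrable_discountedSum hδ hδ0 hε_int _))
    hrec] with ω hω
  refine hω.trans_eq ?_
  have hP := (prodOneAdd_pos (hδ0 · ω) k).ne'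
  have h1δ : 1 + δ k ω ≠ 0 := by linarith [hδ0 k ω]
  simp only [Pi.add_apply, Pi.mul_apply, Pi.sub_apply, w, Y, scaledProcess, discountedSum_succ,
    prodOneAdd_succ]
  field_simp
  ring

theorem supermartingale_scaledProcess [IsFiniteMeasure μ] (hv : Adapted ℱ v) (hθ : Adapted ℱ θ)
    (hε : Adapted ℱ ε) (hδ : Adapted ℱ δ) (hv_int : ∀ n, Integrable (v n) μ)
    (hθ_int : ∀ k, Integrable (θ k) μ) (hε_int : ∀ k, Integrable (ε k) μ)
    (hδ0 : ∀ k ω, 0 ≤ δ k ω)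
    (hrec : ∀ k, μ[v (k + 1) | ℱ k] ≤ᵐ[μ] fun ω => (1 + δ k ω) * v k ω + ε k ω - θ k ω) :
    Supermartingale (scaledProcess v θ ε δ) ℱ μ :=
  supermartingale_nat (adapted_scaledProcess hv hθ hε hδ).stronglyAdapted
    (integrable_scaledProcess hδ hδ0 hv_int hθ_int hε_int)
    fun _ => condExp_scaledProcess_succ_le hθ hε hδ hv_int hθ_int hε_int hδ0 (hrec _)

end Filtered

end RobbinsSiegmund

open RobbinsSiegmund

theorem stmt_18_general {Ω : Type*} {m0 : MeasurableSpace Ω} {μ : Measure Ω}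
    [IsProbabilityMeasure μ] (ℱ : Filtration ℕ m0)
    (v θ ε δ : ℕ → Ω → ℝ)
    (hv_adapted : Adapted ℱ v) (hθ_adapted : Adapted ℱ θ)
    (hε_adapted : Adapted ℱ ε) (hδ_adapted : Adapted ℱ δ)
    (hv_int : ∀ k, Integrable (v k) μ) (hθ_int : ∀ k, Integrable (θ k) μ)
    (hε_int : ∀ k, Integrable (ε k) μ)
    (hv_nonneg : ∀ k ω, 0 ≤ v k ω) (hθ_nonneg : ∀ k ω, 0 ≤ θ k ω)
    (hε_nonneg : ∀ k ω, 0 ≤ ε k ω) (hδ_nonneg : ∀ k ω, 0 ≤ δ k ω)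
    (hε_sum : ∀ᵐ ω ∂μ, Summable (fun k => ε k ω))
    (hδ_sum : ∀ᵐ ω ∂μ, Summable (fun k => δ k ω))
    (hrec : ∀ k, μ[v (k + 1) | ℱ k] ≤ᵐ[μ]
      fun ω => (1 + δ k ω) * v k ω + ε k ω - θ k ω) :
    ∀ᵐ ω ∂μ, (Summable fun k => θ k ω) ∧
      ∃ L, 0 ≤ L ∧ Tendsto (fun k => v k ω) atTop (nhds L) := by
  have hconv := (supermartingale_scaledProcess hv_adapted hθ_adapted hε_adapted hδ_adapted hv_int
    hθ_int hε_int hδ_nonneg hrec).exists_tendsto_of_bddAbove_of_neg_le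
    (fun n => measurable_discountedSum hε_adapted hδ_adapted le_rfl)
    (fun ω => monotone_discountedSum (hδ_nonneg · ω) (hε_nonneg · ω))
    (fun n ω => neg_discountedSum_le_scaledProcess (hv_nonneg · ω) (hθ_nonneg · ω)
      (hδ_nonneg · ω) n)
  filter_upwards [hconv, hε_sum, hδ_sum] with ω hω hεs hδs
  obtain ⟨l, hl⟩ := hω (bddAbove_discountedSum (hδ_nonneg · ω) (hε_nonneg · ω) hεs)
  exact summable_and_tendsto_of_tendsto_scaledProcess (hv_nonneg · ω) (hθ_nonneg · ω)
    (hε_nonneg · ω) (hδ_nonneg · ω) hεs hδs hl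

/-- The Robbins–Siegmund Lemma. -/
theorem stmt_18 {Ω : Type*} {m0 : MeasurableSpace Ω} {μ : Measure Ω}
    [IsProbabilityMeasure μ] (ℱ : Filtration ℕ m0)
    (v θ ε δ : ℕ → Ω → ℝ)
    (hv_adapted : Adapted ℱ v) (hθ_adapted : Adapted ℱ θ)
    (hε_adapted : Adapted ℱ ε) (hδ_adapted : Adapted ℱ δ)
    (hv_int : ∀ k, Integrable (v k) μ) (hθ_int : ∀ k, Integrable (θ k) μ)
    (hε_int : ∀ k, Integrable (ε k) μ) (hδ_int : ∀ k, Integrable (δ k) μ)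
    (hv_nonneg : ∀ k ω, 0 ≤ v k ω) (hθ_nonneg : ∀ k ω, 0 ≤ θ k ω)
    (hε_nonneg : ∀ k ω, 0 ≤ ε k ω) (hδ_nonneg : ∀ k ω, 0 ≤ δ k ω)
    (hε_sum : ∀ᵐ ω ∂μ, Summable (fun k => ε k ω))
    (hδ_sum : ∀ᵐ ω ∂μ, Summable (fun k => δ k ω))
    (hrec : ∀ k, μ[v (k + 1) | ℱ k] ≤ᵐ[μ]
      fun ω => (1 + δ k ω) * v k ω + ε k ω - θ k ω) :
    ∀ᵐ ω ∂μ, (Summable fun k => θ k ω) ∧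
      ∃ L, 0 ≤ L ∧ Tendsto (fun k => v k ω) atTop (nhds L) :=
  stmt_18_general ℱ v θ ε δ hv_adapted hθ_adapted hε_adapted hδ_adapted hv_int hθ_int hε_int
    hv_nonneg hθ_nonneg hε_nonneg hδ_nonneg hε_sum hδ_sum hrec
end

section
/- Let (Ω, F, P) be a probability space with a filtration (F_k), and let (v^k) be a sequence of nonnegative integrable random variables adapted to (F_k) with E[v^0] < ∞. Let (δ^k) and (ε^k) be deterministic sequences of nonnegative real numbers such that δ^k ∈ [0,1] for all k, ∑_{k=0}^∞ δ^k = ∞, ∑_{k=0}^∞ ε^k < ∞, and lim_{k→∞} ε^k/δ^k = 0. If E[v^{k+1} | F_k] ≤ (1−δ^k) v^k + ε^k almost surely for all k ∈ ℕ, then lim_{k→∞} v^k = 0 almost surely. -/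
/-!
Since `δ k ≥ 0`, the recursion gives `E[v (k+1) | ℱ k] ≤ v k + ε k`, so `v k + ∑_{j ≥ k} ε j` is a
nonnegative supermartingale and `v k` converges almost surely. Taking expectations in the
recursion and telescoping gives `∑ δ k E[v k] < ∞`, hence `∑ δ k v k < ∞` almost surely; since
`∑ δ k = ∞`, the almost sure limit of `v k` must be `0`.
-/

open Filter MeasureTheory Topology

theorem summable_of_le_sub_add {a b c : ℕ → ℝ} (ha : ∀ n, 0 ≤ a n) (hb : ∀ n, 0 ≤ b n)
    (hc : Summable c) (hc₀ : ∀ n, 0 ≤ c n) (h : ∀ n, a (n + 1) ≤ a n - b n + c n) :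
    Summable b := by
  have telescope : ∀ n, ∑ k ∈ Finset.range n, b k + a n ≤ a 0 + ∑ k ∈ Finset.range n, c k := by
    intro n
    induction n with
    | zero => simp
    | succ n ih =>
      rw [Finset.sum_range_succ, Finset.sum_range_succ]
      linarith [h n]
  refine summable_of_sum_range_le (c := a 0 + ∑' k, c k) hb fun n => ?_
  linarith [telescope n, ha n, hc.sum_le_tsum (Finset.range n) (fun k _ => hc₀ k)]

theorem eq_zero_of_tendsto_of_summable_mul {u δ : ℕ → ℝ} {c : ℝ} (hu : Tendsto u atTop (𝓝 c))
    (hδu : Summable fun k => δ k * u k) (hδ : ¬ Summable δ) : c = 0 := by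
  by_contra hc
  refine hδ <| (hδu.abs.mul_left (2 / |c|)).of_norm_bounded_eventually_nat ?_
  filter_upwards [hu.abs.eventually (eventually_gt_nhds (half_lt_self (abs_pos.2 hc)))] with k hk
  rw [Real.norm_eq_abs, abs_mul, ← mul_assoc, div_mul_eq_mul_div, div_mul_eq_mul_div,
    le_div_iff₀ (abs_pos.2 hc)]
  nlinarith [abs_nonneg (δ k)]

theorem ae_summable_of_summable_integral {Ω : Type*} {m0 : MeasurableSpace Ω} {μ : Measure Ω}
    {f : ℕ → Ω → ℝ} (hf : ∀ n, Integrable (f n) μ) (hf₀ : ∀ n, 0 ≤ᵐ[μ] f n)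
    (hsum : Summable fun n => ∫ ω, f n ω ∂μ) : ∀ᵐ ω ∂μ, Summable fun n => f n ω := by
  have hmeas : ∀ n, AEMeasurable (fun ω => ENNReal.ofReal (f n ω)) μ :=
    fun n => (hf n).aemeasurable.ennreal_ofReal
  have hlint : ∫⁻ ω, ∑' n, ENNReal.ofReal (f n ω) ∂μ ≠ ⊤ := by
    rw [lintegral_tsum hmeas]
    simp_rw [← ofReal_integral_eq_lintegral_ofReal (hf _) (hf₀ _)]
    rw [← ENNReal.ofReal_tsum_of_nonneg (fun n => integral_nonneg_of_ae (hf₀ n)) hsum]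
    exact ENNReal.ofReal_ne_top
  filter_upwards [ae_lt_top' (AEMeasurable.tsum hmeas) hlint, ae_all_iff.2 hf₀]
    with ω hω hω₀
  refine (ENNReal.summable_toReal hω.ne).congr fun n => ?_
  exact ENNReal.toReal_ofReal (hω₀ n)

theorem tsum_nat_add_eq_add_tsum_nat_add_succ {ε : ℕ → ℝ} (hε : Summable ε) (k : ℕ) :
    ∑' j, ε (j + k) = ε k + ∑' j, ε (j + (k + 1)) := by
  rw [((summable_nat_add_iff k).2 hε).tsum_eq_zero_add]
  simp only [zero_add, add_right_comm _ 1 k, add_assoc]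

theorem integral_le_of_condExp_le {Ω : Type*} {m m0 : MeasurableSpace Ω} {μ : Measure Ω}
    (hm : m ≤ m0) [SigmaFinite (μ.trim hm)] {f g : Ω → ℝ} (hg : Integrable g μ)
    (hfg : μ[f | m] ≤ᵐ[μ] g) :
    ∫ ω, f ω ∂μ ≤ ∫ ω, g ω ∂μ := by
  rw [← integral_condExp hm]
  exact integral_mono_ae integrable_condExp hg hfg

section Martingale

variable {Ω : Type*} {m0 : MeasurableSpace Ω} {μ : Measure Ω} [IsFiniteMeasure μ]
  {ℱ : Filtration ℕ m0}

theorem MeasureTheory.Supermartingale.exists_ae_tendsto_of_nonneg {f : ℕ → Ω → ℝ}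
    (hf : Supermartingale f ℱ μ) (hf₀ : ∀ n ω, 0 ≤ f n ω) :
    ∀ᵐ ω ∂μ, ∃ c, Tendsto (fun n => f n ω) atTop (𝓝 c) := by
  have hbdd : ∀ n, eLpNorm ((-f) n) 1 μ ≤ ENNReal.ofReal (∫ ω, f 0 ω ∂μ) := by
    intro n
    rw [Pi.neg_apply, eLpNorm_neg, eLpNorm_one_eq_lintegral_enorm,
      lintegral_congr fun ω => Real.enorm_eq_ofReal (hf₀ n ω),
      ← ofReal_integral_eq_lintegral_ofReal (hf.integrable n) (.of_forall (hf₀ n))]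
    refine ENNReal.ofReal_le_ofReal ?_
    simpa using hf.setIntegral_le (Nat.zero_le n) MeasurableSet.univ
  filter_upwards [hf.neg.exists_ae_tendsto_of_bdd hbdd] with ω ⟨c, hc⟩
  exact ⟨-c, by simpa using hc.neg⟩

theorem supermartingale_add_tsum_nat_add {v : ℕ → Ω → ℝ} {ε : ℕ → ℝ}
    (hv : Adapted ℱ v) (hv_int : ∀ k, Integrable (v k) μ) (hε : Summable ε)
    (hrec : ∀ k, μ[v (k + 1) | ℱ k] ≤ᵐ[μ] fun ω => v k ω + ε k) :
    Supermartingale (fun k ω => v k ω + ∑' j, ε (j + k)) ℱ μ := by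
  refine supermartingale_nat (fun k => ((hv k).add measurable_const).stronglyMeasurable)
    (fun k => (hv_int k).add (integrable_const _)) fun k => ?_
  have hcond : μ[fun ω => v (k + 1) ω + ∑' j, ε (j + (k + 1)) | ℱ k]
      =ᵐ[μ] μ[v (k + 1) | ℱ k] + fun _ => ∑' j, ε (j + (k + 1)) := by
    refine (condExp_add (hv_int (k + 1)) (integrable_const _) (ℱ k)).trans ?_
    rw [condExp_const (ℱ.le k)]
  filter_upwards [hcond, hrec k] with ω hω hωrec
  rw [hω, tsum_nat_add_eq_add_tsum_nat_add_succ hε k, Pi.add_apply]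
  linarith

theorem ae_exists_tendsto_of_condExp_le_add {v : ℕ → Ω → ℝ} {ε : ℕ → ℝ}
    (hv : Adapted ℱ v) (hv_int : ∀ k, Integrable (v k) μ) (hv₀ : ∀ k ω, 0 ≤ v k ω)
    (hε : Summable ε) (hε₀ : ∀ k, 0 ≤ ε k)
    (hrec : ∀ k, μ[v (k + 1) | ℱ k] ≤ᵐ[μ] fun ω => v k ω + ε k) :
    ∀ᵐ ω ∂μ, ∃ c, Tendsto (fun n => v n ω) atTop (𝓝 c) := by
  have hY₀ : ∀ k ω, 0 ≤ v k ω + ∑' j, ε (j + k) :=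
    fun k ω => add_nonneg (hv₀ k ω) (tsum_nonneg fun j => hε₀ _)
  filter_upwards [(supermartingale_add_tsum_nat_add hv hv_int hε hrec).exists_ae_tendsto_of_nonneg
    hY₀] with ω ⟨c, hc⟩
  exact ⟨c, by simpa using hc.sub (tendsto_sum_nat_add ε)⟩

end Martingale

theorem stmt_19_general {Ω : Type*} {m0 : MeasurableSpace Ω} {μ : Measure Ω}
    [IsProbabilityMeasure μ] (ℱ : Filtration ℕ m0)
    (v : ℕ → Ω → ℝ) (δ ε : ℕ → ℝ)
    (hv_adapted : Adapted ℱ v)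
    (hv_int : ∀ k, Integrable (v k) μ)
    (hv_nonneg : ∀ k ω, 0 ≤ v k ω)
    (hδ : ∀ k, 0 ≤ δ k ∧ δ k ≤ 1) (hε : ∀ k, 0 ≤ ε k)
    (hδdiv : ¬ Summable δ) (hεsum : Summable ε)
    (hrec : ∀ k, μ[v (k + 1) | ℱ k] ≤ᵐ[μ]
      fun ω => (1 - δ k) * v k ω + ε k) :
    ∀ᵐ ω ∂μ, Tendsto (fun k => v k ω) atTop (nhds 0) := by
  have hrec' : ∀ k, μ[v (k + 1) | ℱ k] ≤ᵐ[μ] fun ω => v k ω + ε k := fun k =>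
    (hrec k).trans (.of_forall fun ω => by nlinarith [(hδ k).1, hv_nonneg k ω])
  have hmean : ∀ k, ∫ ω, v (k + 1) ω ∂μ ≤ ∫ ω, v k ω ∂μ - δ k * ∫ ω, v k ω ∂μ + ε k := by
    intro k
    have hint := (hv_int k).const_mul (1 - δ k)
    have h := integral_le_of_condExp_le (g := fun ω => (1 - δ k) * v k ω + ε k) (ℱ.le k)
      (hint.add (integrable_const _)) (hrec k)
    rw [integral_add hint (integrable_const _), integral_const_mul, integral_const, probReal_univ,
      one_smul] at h
    linarith
  have hsum : ∀ᵐ ω ∂μ, Summable fun k => δ k * v k ω := by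
    refine ae_summable_of_summable_integral (fun k => (hv_int k).const_mul _)
      (fun k => .of_forall fun ω => mul_nonneg (hδ k).1 (hv_nonneg k ω)) ?_
    simp_rw [integral_const_mul]
    exact summable_of_le_sub_add (fun k => integral_nonneg (hv_nonneg k))
      (fun k => mul_nonneg (hδ k).1 (integral_nonneg (hv_nonneg k))) hεsum hε hmean
  filter_upwards [ae_exists_tendsto_of_condExp_le_add hv_adapted hv_int hv_nonneg hεsum hε hrec',
    hsum] with ω ⟨c, hc⟩ hω
  rwa [eq_zero_of_tendsto_of_summable_mul hc hω hδdiv] at hc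

/-- Lemma 2.2.10 of Polyak (1987). -/
theorem stmt_19 {Ω : Type*} {m0 : MeasurableSpace Ω} {μ : Measure Ω}
    [IsProbabilityMeasure μ] (ℱ : Filtration ℕ m0)
    (v : ℕ → Ω → ℝ) (δ ε : ℕ → ℝ)
    (hv_adapted : Adapted ℱ v)
    (hv_int : ∀ k, Integrable (v k) μ)
    (hv_nonneg : ∀ k ω, 0 ≤ v k ω)
    (hδ : ∀ k, 0 ≤ δ k ∧ δ k ≤ 1) (hε : ∀ k, 0 ≤ ε k)
    (hδdiv : ¬ Summable δ) (hεsum : Summable ε)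
    (hεδ : Tendsto (fun k => ε k / δ k) atTop (nhds 0))
    (hrec : ∀ k, μ[v (k + 1) | ℱ k] ≤ᵐ[μ]
      fun ω => (1 - δ k) * v k ω + ε k) :
    ∀ᵐ ω ∂μ, Tendsto (fun k => v k ω) atTop (nhds 0) :=
  stmt_19_general ℱ v δ ε hv_adapted hv_int hv_nonneg hδ hε hδdiv hεsum hrec
end
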